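/- arXiv:1903.06977 — 3 statements merged into one kernel-verified Lean document; each statement's English description precedes it below -/
import Mathlib

section
/- Let (X, μ, T) be a measure-preserving dynamical system with μ an infinite (σ-finite) measure, and let (B_m)_{m≥1} be measurable targets with μ(B_m) → 0. If μ(E_ah) = ∞, then there exists a sequence c_m → ∞ such that μ(B_m) ≥ c_m/m for all m; equivalently, m·μ(B_m) → ∞. -/
/-!
If `x` hits `B m` within its first `m` iterates for all large `m`, then `x` lies in
`⋃ k < m, T^[k] ⁻¹' B m` for all large `m`, so the eventually always hitting set is the
`liminf` of these sets. Since `T` preserves `μ`, each of them has measure at most `m * μ (B m)`,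
and Fatou's lemma for sets gives `μ (eahSet T B) ≤ liminf (m * μ (B m))`.
-/

open MeasureTheory Filter Set
open scoped ENNReal

/-- The set of eventually always hitting points: there is `m₀` such that for every
`m ≥ m₀` the orbit segment `x, T x, …, T^[m-1] x` meets `B m`. -/
def eahSet {X : Type*} (T : X → X) (B : ℕ → Set X) : Set X :=
  {x | ∃ m₀ : ℕ, ∀ m : ℕ, m₀ ≤ m → ∃ k : ℕ, k < m ∧ T^[k] x ∈ B m}

theorem MeasureTheory.measure_liminf_le_liminf_measure {α : Type*} [MeasurableSpace α]
    (μ : Measure α) (s : ℕ → Set α) :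
    μ (liminf s atTop) ≤ liminf (fun n => μ (s n)) atTop := by
  have hmono : Monotone fun n => ⋂ i ≥ n, s i :=
    fun a b hab => biInter_mono (fun i hi => hab.trans hi) fun _ _ => subset_rfl
  simp only [liminf_eq_iSup_iInf_of_nat, iSup_eq_iUnion, iInf_eq_iInter]
  rw [hmono.measure_iUnion]
  gcongr with n
  exact le_iInf₂ fun i hi => measure_mono (biInter_subset_of_mem hi)

theorem MeasureTheory.MeasurePreserving.measure_iUnion_preimage_iterate_le {α : Type*}
    [MeasurableSpace α] {μ : Measure α} {T : α → α} (hT : MeasurePreserving T μ μ)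
    (s : Set α) (m : ℕ) : μ (⋃ k < m, T^[k] ⁻¹' s) ≤ m * μ s :=
  calc μ (⋃ k < m, T^[k] ⁻¹' s) ≤ ∑ k ∈ Finset.range m, μ (T^[k] ⁻¹' s) := by
        simpa only [← Finset.mem_range] using measure_biUnion_finset_le (Finset.range m) _
    _ ≤ ∑ k ∈ Finset.range m, μ s :=
        Finset.sum_le_sum fun k _ => (hT.iterate k).measure_preimage_le s
    _ = m * μ s := by simp

theorem eahSet_eq_liminf {X : Type*} (T : X → X) (B : ℕ → Set X) :
    eahSet T B = liminf (fun m => ⋃ k < m, T^[k] ⁻¹' B m) atTop := by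
  ext x
  simp [eahSet, mem_liminf_iff_eventually_mem]

theorem ENNReal.exists_tendsto_atTop_ofReal_div_le {a : ℕ → ℝ≥0∞}
    (ha : Tendsto (fun m : ℕ => (m : ℝ≥0∞) * a m) atTop (nhds ∞)) :
    ∃ c : ℕ → ℝ, Tendsto c atTop atTop ∧ ∀ m : ℕ, 1 ≤ m → ENNReal.ofReal (c m / m) ≤ a m := by
  -- capping at `m` keeps the witness finite, since `toReal ∞ = 0`
  have hfin : ∀ m : ℕ, min ((m : ℝ≥0∞) * a m) m ≠ ∞ :=
    fun m => (min_le_right _ _).trans_lt (natCast_lt_top m) |>.ne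
  refine ⟨fun m => (min ((m : ℝ≥0∞) * a m) m).toReal, ?_, fun m hm => ?_⟩
  · rw [← tendsto_ofReal_nhds_top]
    simpa only [ofReal_toReal (hfin _), min_self] using ha.min tendsto_nat_nhds_top
  · have hm0 : (m : ℝ≥0∞) ≠ 0 := by exact_mod_cast (Nat.one_le_iff_ne_zero.mp hm)
    rw [ofReal_div_of_pos (by exact_mod_cast hm), ofReal_toReal (hfin m), ofReal_natCast,
      ENNReal.div_le_iff hm0 (natCast_ne_top m), mul_comm]
    exact min_le_left _ _

theorem measure_eahSet_le_liminf {X : Type*} [MeasurableSpace X] {μ : Measure X} {T : X → X}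
    (hT : MeasurePreserving T μ μ) (B : ℕ → Set X) :
    μ (eahSet T B) ≤ liminf (fun m : ℕ => (m : ℝ≥0∞) * μ (B m)) atTop :=
  calc μ (eahSet T B) ≤ liminf (fun m => μ (⋃ k < m, T^[k] ⁻¹' B m)) atTop :=
        eahSet_eq_liminf T B ▸ measure_liminf_le_liminf_measure μ _
    _ ≤ liminf (fun m : ℕ => (m : ℝ≥0∞) * μ (B m)) atTop :=
        liminf_le_liminf <| .of_forall fun m => hT.measure_iUnion_preimage_iterate_le (B m) m

theorem eah_infinite_necessary_general {X : Type*} [MeasurableSpace X]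
    (μ : Measure X)
    (T : X → X) (hT : MeasurePreserving T μ μ)
    (B : ℕ → Set X)
    (hfull : μ (eahSet T B) = ∞) :
    (∃ c : ℕ → ℝ, Tendsto c atTop atTop ∧
      ∀ m : ℕ, 1 ≤ m → ENNReal.ofReal (c m / m) ≤ μ (B m)) ∧
    Tendsto (fun m : ℕ => (m : ℝ≥0∞) * μ (B m)) atTop (nhds ∞) := by
  have hgrowth : Tendsto (fun m : ℕ => (m : ℝ≥0∞) * μ (B m)) atTop (nhds ∞) :=
    tendsto_of_le_liminf_of_limsup_le (hfull ▸ measure_eahSet_le_liminf hT B) le_top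
  exact ⟨ENNReal.exists_tendsto_atTop_ofReal_div_le hgrowth, hgrowth⟩

/-- For a measure-preserving system with an infinite σ-finite measure and targets
satisfying `μ (B m) → 0`, if the set of eventually always hitting points has infinite
measure then there is a sequence `c m → ∞` with `μ (B m) ≥ c m / m` for all `m ≥ 1`;
equivalently, `m·μ (B m) → ∞`. -/
theorem eah_infinite_necessary {X : Type*} [MeasurableSpace X]
    (μ : Measure X) [SigmaFinite μ] (hinf : μ Set.univ = ∞)
    (T : X → X) (hT : MeasurePreserving T μ μ)
    (B : ℕ → Set X) (hmeas : ∀ m, MeasurableSet (B m))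
    (hlim : Tendsto (fun m => μ (B m)) atTop (nhds 0))
    (hfull : μ (eahSet T B) = ∞) :
    (∃ c : ℕ → ℝ, Tendsto c atTop atTop ∧
      ∀ m : ℕ, 1 ≤ m → ENNReal.ofReal (c m / m) ≤ μ (B m)) ∧
    Tendsto (fun m : ℕ => (m : ℝ≥0∞) * μ (B m)) atTop (nhds ∞) :=
  eah_infinite_necessary_general μ T hT B hfull
end

section
/- Let (X, μ, T) be an ergodic measure-preserving dynamical system with μ an infinite (σ-finite) measure, and let (B_m)_{m≥1} be a nested sequence of measurable targets with μ(B_m) → 0. If there exists c ∈ ℝ such that μ(B_m) ≤ c/m holds for infinitely many m, then μ(E_ah) = 0. -/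
open MeasureTheory Filter Set
open scoped ENNReal

/-!
The stage `E_n` of `E_ah` where the hitting starts at `n` lies in `⋃_{k < m} T^{-k} B_m` for all `m ≥ n`, so by
invariance of `μ` its measure is at most `m μ(B_m)`, hence at most `c` along the `m` with
`μ(B_m) ≤ c/m`; thus `μ(E_ah) ≤ c < ∞`. For nested targets, a point of `E_ah` whose image
leaves `E_ah` must lie in every `B_m`, a null set, so `E_ah` is a.e. forward invariant. An
a.e. invariant set of finite measure for an ergodic map of an infinite measure is null.
-/

section EventuallyAlwaysHitting

variable {X : Type*} (T : X → X) (B : ℕ → Set X)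

def eahFrom (n : ℕ) : Set X :=
  {x | ∀ m : ℕ, n ≤ m → ∃ k : ℕ, k < m ∧ T^[k] x ∈ B m}

theorem eahSet_eq_iUnion_eahFrom : eahSet T B = ⋃ n, eahFrom T B n := by
  ext x
  simp [eahSet, eahFrom]

theorem monotone_eahFrom : Monotone (eahFrom T B) :=
  fun _ _ hab _ hx m hm => hx m (hab.trans hm)

theorem eahFrom_subset_biUnion_preimage {n m : ℕ} (hnm : n ≤ m) :
    eahFrom T B n ⊆ ⋃ k ∈ Finset.range m, T^[k] ⁻¹' B m := by
  intro x hx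
  obtain ⟨k, hkm, hk⟩ := hx m hnm
  exact mem_biUnion (Finset.mem_range.2 hkm) hk

theorem eahSet_diff_preimage_subset_iInter (hB : Antitone B) :
    eahSet T B \ T ⁻¹' eahSet T B ⊆ ⋂ m, B m := by
  rintro x ⟨⟨m₀, hx⟩, hTx⟩
  simp only [mem_preimage, eahSet, mem_ofPred_eq, not_exists, not_forall, not_and] at hTx
  refine mem_iInter.2 fun j => ?_
  obtain ⟨m, hm, hmiss⟩ := hTx (max m₀ j)
  obtain ⟨k, hk, hkx⟩ := hx (m + 1) (by omega)
  -- A hit at time `k ≥ 1` would be a hit of `B m` by the orbit of `T x` at time `k - 1 < m`.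
  obtain rfl | hk0 := Nat.eq_zero_or_pos k
  · exact hB (by omega : j ≤ m + 1) hkx
  · refine absurd ?_ (hmiss (k - 1) (by omega))
    rw [← Function.iterate_succ_apply, Nat.succ_eq_add_one, Nat.sub_add_cancel hk0]
    exact hB (Nat.le_succ m) hkx

variable [MeasurableSpace X]

theorem measurableSet_eahFrom (hT : Measurable T) (hB : ∀ m, MeasurableSet (B m)) (n : ℕ) :
    MeasurableSet (eahFrom T B n) := by
  simp only [eahFrom, ofPred_forall, ofPred_exists, ofPred_and]
  exact .iInter fun m => .iInter fun _ => .iUnion fun k => .inter (by simp)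
    ((hT.iterate k) (hB m))

theorem measurableSet_eahSet (hT : Measurable T) (hB : ∀ m, MeasurableSet (B m)) :
    MeasurableSet (eahSet T B) := by
  rw [eahSet_eq_iUnion_eahFrom]
  exact .iUnion (measurableSet_eahFrom T B hT hB)

variable {T B} {μ : Measure X}

theorem measure_eahFrom_le (hT : MeasurePreserving T μ μ) (hB : ∀ m, MeasurableSet (B m))
    {n m : ℕ} (hnm : n ≤ m) : μ (eahFrom T B n) ≤ m * μ (B m) := calc
  μ (eahFrom T B n) ≤ μ (⋃ k ∈ Finset.range m, T^[k] ⁻¹' B m) :=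
    measure_mono (eahFrom_subset_biUnion_preimage T B hnm)
  _ ≤ ∑ k ∈ Finset.range m, μ (T^[k] ⁻¹' B m) := measure_biUnion_finset_le _ _
  _ = ∑ _k ∈ Finset.range m, μ (B m) :=
    Finset.sum_congr rfl fun k _ => (hT.iterate k).measure_preimage (hB m).nullMeasurableSet
  _ = m * μ (B m) := by simp

theorem measure_eahSet_le_ofReal (hT : MeasurePreserving T μ μ)
    (hB : ∀ m, MeasurableSet (B m)) {c : ℝ}
    (hc : ∃ᶠ m : ℕ in atTop, μ (B m) ≤ ENNReal.ofReal (c / m)) :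
    μ (eahSet T B) ≤ ENNReal.ofReal c := by
  rw [eahSet_eq_iUnion_eahFrom, (monotone_eahFrom T B).measure_iUnion]
  refine iSup_le fun n => ?_
  obtain ⟨m, hm, hmn⟩ := (hc.and_eventually (eventually_ge_atTop (max n 1))).exists
  calc μ (eahFrom T B n) ≤ m * μ (B m) := measure_eahFrom_le hT hB (le_of_max_le_left hmn)
    _ ≤ ENNReal.ofReal m * ENNReal.ofReal (c / m) := by rw [ENNReal.ofReal_natCast]; gcongr
    _ = ENNReal.ofReal c := by
      have : (m : ℝ) ≠ 0 := by norm_cast; omega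
      rw [← ENNReal.ofReal_mul (Nat.cast_nonneg m), mul_div_cancel₀ c this]

end EventuallyAlwaysHitting

theorem Ergodic.measure_eq_zero_of_ae_le_preimage {X : Type*} [MeasurableSpace X]
    {μ : Measure X} {T : X → X} {s : Set X} (hT : Ergodic T μ) (hμ : μ univ = ∞)
    (hs : NullMeasurableSet s μ) (hsT : s ≤ᵐ[μ] T ⁻¹' s) (hfin : μ s ≠ ∞) : μ s = 0 := by
  obtain h | h := hT.ae_empty_or_univ_of_ae_le_preimage' hs hsT hfin
  · simpa using measure_congr h
  · exact absurd (hμ ▸ measure_congr h) hfin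

theorem eah_zero_sufficient_infinite_general {X : Type*} [MeasurableSpace X]
    (μ : Measure X) (hinf : μ Set.univ = ∞)
    (T : X → X) (hT : Ergodic T μ)
    (B : ℕ → Set X) (hmeas : ∀ m, MeasurableSet (B m))
    (hnested : ∀ m, B (m + 1) ⊆ B m)
    (hlim : Tendsto (fun m => μ (B m)) atTop (nhds 0))
    (hc : ∃ c : ℝ, ∃ᶠ m : ℕ in atTop, μ (B m) ≤ ENNReal.ofReal (c / m)) :
    μ (eahSet T B) = 0 := by
  obtain ⟨c, hc⟩ := hc
  have hfin : μ (eahSet T B) ≠ ∞ :=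
    (measure_eahSet_le_ofReal hT.toMeasurePreserving hmeas hc).trans_lt ENNReal.ofReal_lt_top |>.ne
  have hcore : μ (⋂ m, B m) = 0 :=
    le_antisymm (ge_of_tendsto' hlim fun m => measure_mono (iInter_subset B m)) zero_le
  have hinv : eahSet T B ≤ᵐ[μ] T ⁻¹' eahSet T B := ae_le_set.2 <| measure_mono_null
    (eahSet_diff_preimage_subset_iInter T B (antitone_nat_of_succ_le hnested)) hcore
  exact hT.measure_eq_zero_of_ae_le_preimage hinf
    (measurableSet_eahSet T B hT.measurable hmeas).nullMeasurableSet hinv hfin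

/-- For an ergodic measure-preserving system with an infinite σ-finite measure and a
nested sequence of measurable targets with `μ (B m) → 0`: if there is `c ∈ ℝ` with
`μ (B m) ≤ c / m` for infinitely many `m`, then the set of eventually always hitting
points has measure zero. -/
theorem eah_zero_sufficient_infinite {X : Type*} [MeasurableSpace X]
    (μ : Measure X) [SigmaFinite μ] (hinf : μ Set.univ = ∞)
    (T : X → X) (hT : Ergodic T μ)
    (B : ℕ → Set X) (hmeas : ∀ m, MeasurableSet (B m))
    (hnested : ∀ m, B (m + 1) ⊆ B m)
    (hlim : Tendsto (fun m => μ (B m)) atTop (nhds 0))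
    (hc : ∃ c : ℝ, ∃ᶠ m : ℕ in atTop, μ (B m) ≤ ENNReal.ofReal (c / m)) :
    μ (eahSet T B) = 0 :=
  eah_zero_sufficient_infinite_general μ hinf T hT B hmeas hnested hlim hc
end

section
/- Let (X, μ, T) be a measure-preserving dynamical system with X ⊆ ℝ an interval and μ a probability measure, and suppose correlations decay as p for L¹ against BV: |∫ f∘Tⁿ · g dμ − ∫ f dμ ∫ g dμ| ≤ ‖f‖₁ ‖g‖_BV p(n) for all n ≥ 1 and all f ∈ L¹(μ), g of bounded variation. Suppose p(n) ≤ C/n^t for some C ≥ 0 and t > 0. Let (B_m)_{m≥1} be a sequence of balls (intervals) in X with μ(B_m) → 0. If μ(B_m) ≥ c/m^a for some c > 0 and some a < t/(1+t) and all m, then μ(E_ah) = 1. -/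
open MeasureTheory Filter Set
open scoped ENNReal

/-- The BV norm of `g` on `X` with respect to `μ`: total variation plus `L¹` norm. -/
noncomputable def bvNorm (X : Set ℝ) (μ : MeasureTheory.Measure ℝ) (g : ℝ → ℝ) : ℝ :=
  (eVariationOn g X).toReal + ∫ x, |g x| ∂μ

open Real

/-! An interval target `S` has an indicator of variation at most `2`, so the correlation bound
applied to `𝟙_A` and `𝟙_{Sᶜ}` gives `μ (Sᶜ ∩ T^{-n} A) ≤ μ A * (μ Sᶜ + 3 p n)`. Sampling the orbit
at the times `0, n, 2n, …` therefore bounds the measure of the points whose first `m` iterates miss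
`S` by `(1 - μ S + 3 p n) ^ ⌊m / n⌋`. A gap `n ≍ m ^ (a / t)` makes `3 p n ≤ μ S / 2` when
`μ S ≥ c / m ^ a`, and the bound becomes `exp (-κ m ^ (1 - a - a / t))`, which is summable
precisely because `a < t / (1 + t)`. Borel–Cantelli finishes the proof. -/

theorem indicator_one_mem_Icc {α : Type*} (U : Set α) (x : α) :
    U.indicator (1 : α → ℝ) x ∈ Icc 0 1 := by
  by_cases hx : x ∈ U <;> simp [hx]

section Variation

variable {α : Type*} [LinearOrder α]

theorem MonotoneOn.eVariationOn_le_of_mem_Icc {f : α → ℝ} {s : Set α}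
    (hf : MonotoneOn f s) {lo hi : ℝ} (h : ∀ x ∈ s, f x ∈ Icc lo hi) :
    eVariationOn f s ≤ ENNReal.ofReal (hi - lo) := by
  rw [eVariationOn.eq_biSup_inter_Icc]
  refine iSup₂_le fun ⟨a, b⟩ ⟨ha, hb, _⟩ => ?_
  rw [hf.eVariationOn_eq ha hb]
  exact ENNReal.ofReal_le_ofReal (sub_le_sub (h b hb).2 (h a ha).1)

theorem IsUpperSet.eVariationOn_indicator_one_le {U : Set α} (hU : IsUpperSet U)
    (s : Set α) : eVariationOn (U.indicator (1 : α → ℝ)) s ≤ 1 := by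
  have hmono : Monotone (U.indicator (1 : α → ℝ)) := fun x y hxy => by
    by_cases hx : x ∈ U
    · simp [hx, hU hxy hx]
    · simpa [hx] using (indicator_one_mem_Icc U y).1
  simpa using (hmono.monotoneOn s).eVariationOn_le_of_mem_Icc fun x _ => indicator_one_mem_Icc U x

theorem eVariationOn_indicator_one_compl (S s : Set α) :
    eVariationOn (Sᶜ.indicator (1 : α → ℝ)) s = eVariationOn (S.indicator (1 : α → ℝ)) s := by
  simp only [eVariationOn, indicator_compl, Pi.sub_apply, Pi.one_apply, edist_sub_left]

theorem IsLowerSet.eVariationOn_indicator_one_le {L : Set α} (hL : IsLowerSet L)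
    (s : Set α) : eVariationOn (L.indicator (1 : α → ℝ)) s ≤ 1 := by
  rw [← eVariationOn_indicator_one_compl]
  exact hL.compl.eVariationOn_indicator_one_le s

theorem Set.OrdConnected.eVariationOn_indicator_one_le {S : Set α} (hS : S.OrdConnected)
    (s : Set α) : eVariationOn (S.indicator (1 : α → ℝ)) s ≤ 2 := by
  have hnorm : ∀ (U : Set α), ∀ x ∈ s, ‖U.indicator (1 : α → ℝ) x‖ₑ ≤ 1 := fun U x _ => by
    by_cases hx : x ∈ U <;> simp [hx]
  rw [← hS.upperClosure_inter_lowerClosure, inter_indicator_one]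
  calc _ ≤ 1 * eVariationOn ((lowerClosure S : Set α).indicator 1) s
        + 1 * eVariationOn ((upperClosure S : Set α).indicator 1) s :=
        eVariation_mul_le (hnorm _) (hnorm _)
    _ ≤ 1 * 1 + 1 * 1 := by
        gcongr
        exacts [(lowerClosure S).lower.eVariationOn_indicator_one_le s,
          (upperClosure S).upper.eVariationOn_indicator_one_le s]
    _ = 2 := by norm_num

theorem Set.OrdConnected.eVariationOn_indicator_one_compl_le {S : Set α} (hS : S.OrdConnected)
    (s : Set α) : eVariationOn (Sᶜ.indicator (1 : α → ℝ)) s ≤ 2 :=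
  eVariationOn_indicator_one_compl S s ▸ hS.eVariationOn_indicator_one_le s

end Variation

def missSet {α : Type*} (T : α → α) (S : Set α) (m : ℕ) : Set α := {x | ∀ k < m, T^[k] x ∉ S}

section missSet

variable {α : Type*} {T : α → α} {S : Set α}

theorem missSet_zero : missSet T S 0 = univ := by simp [missSet]

theorem missSet_succ (j : ℕ) : missSet T S (j + 1) = Sᶜ ∩ T ⁻¹' missSet T S j := by
  ext x
  simp only [missSet, mem_ofPred_eq, mem_inter_iff, mem_compl_iff, mem_preimage,
    ← Function.iterate_succ_apply, Nat.forall_lt_succ_left, Function.iterate_zero_apply]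

theorem missSet_subset_missSet_iterate (n m : ℕ) : missSet T S m ⊆ missSet T^[n] S (m / n) := by
  intro x hx i hi
  rw [← Function.iterate_mul]
  have hn : 0 < n := Nat.pos_of_ne_zero (by rintro rfl; simp at hi)
  exact hx _ ((Nat.mul_lt_mul_of_pos_left hi hn).trans_le (Nat.mul_div_le m n))

theorem measurableSet_missSet [MeasurableSpace α] (hT : Measurable T) (hS : MeasurableSet S)
    (m : ℕ) : MeasurableSet (missSet T S m) := by
  induction m with
  | zero => simp [missSet_zero]
  | succ j ih => rw [missSet_succ]; exact hS.compl.inter (hT ih)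

theorem eahSet_eq (B : ℕ → Set α) : eahSet T B = {x | ∀ᶠ m in atTop, x ∉ missSet T (B m) m} := by
  ext x
  simp [eahSet, missSet, eventually_atTop]

end missSet

section Measure

variable {α : Type*} [MeasurableSpace α] {μ : Measure α} {T : α → α} {S : Set α}

theorem measureReal_missSet_le_pow [IsProbabilityMeasure μ] (hT : Measurable T)
    (hS : MeasurableSet S) {q : ℝ} (hq : 0 ≤ q)
    (hstep : ∀ A, MeasurableSet A → μ.real (Sᶜ ∩ T ⁻¹' A) ≤ μ.real A * q) (j : ℕ) :
    μ.real (missSet T S j) ≤ q ^ j := by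
  induction j with
  | zero => simp [missSet_zero]
  | succ j ih =>
    rw [missSet_succ, pow_succ]
    exact (hstep _ (measurableSet_missSet hT hS j)).trans (by gcongr)

theorem measure_eahSet_eq_one_of_summable [IsProbabilityMeasure μ] {B : ℕ → Set α}
    (h : Summable fun m => μ.real (missSet T (B m) m)) : μ (eahSet T B) = 1 := by
  have hsum : ∑' m, μ (missSet T (B m) m) ≠ ∞ := by
    have := ENNReal.ofReal_tsum_of_nonneg (fun _ => measureReal_nonneg) h
    simp only [ofReal_measureReal (measure_ne_top μ _)] at this
    exact this ▸ ENNReal.ofReal_ne_top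
  rw [eahSet_eq, measure_congr (ae_eq_univ.2 (ae_eventually_notMem hsum)), measure_univ]

end Measure

def DecayOfCorrelations (X : Set ℝ) (μ : Measure ℝ) (T : ℝ → ℝ) (p : ℕ → ℝ) : Prop :=
  ∀ n : ℕ, 1 ≤ n → ∀ f g : ℝ → ℝ, Integrable f μ → eVariationOn g X ≠ ∞ →
    |(∫ x, f (T^[n] x) * g x ∂μ) - (∫ x, f x ∂μ) * ∫ x, g x ∂μ| ≤
      (∫ x, |f x| ∂μ) * bvNorm X μ g * p n

theorem integral_abs_indicator_one {α : Type*} [MeasurableSpace α] {μ : Measure α} {s : Set α}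
    (hs : MeasurableSet s) : ∫ x, |s.indicator (1 : α → ℝ) x| ∂μ = μ.real s := by
  simp_rw [abs_of_nonneg (indicator_one_mem_Icc s _).1]
  exact integral_indicator_one hs

theorem bvNorm_nonneg (X : Set ℝ) (μ : Measure ℝ) (g : ℝ → ℝ) : 0 ≤ bvNorm X μ g :=
  add_nonneg ENNReal.toReal_nonneg (integral_nonneg fun _ => abs_nonneg _)

section Correlations

variable {X : Set ℝ} {μ : Measure ℝ} [IsProbabilityMeasure μ] {T : ℝ → ℝ} {p : ℕ → ℝ}
  {S : Set ℝ}

theorem bvNorm_indicator_one_compl_le (hS : S.OrdConnected) :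
    bvNorm X μ (Sᶜ.indicator 1) ≤ 3 := by
  have := ENNReal.toReal_mono (by norm_num) (hS.eVariationOn_indicator_one_compl_le X)
  rw [ENNReal.toReal_ofNat] at this
  rw [bvNorm, integral_abs_indicator_one hS.measurableSet.compl]
  linarith [measureReal_le_one (μ := μ) (s := Sᶜ)]

theorem measureReal_compl_inter_preimage_le (hcorr : DecayOfCorrelations X μ T p)
    (hT : Measurable T) (hS : S.OrdConnected) {n : ℕ} (hn : 1 ≤ n) {ε : ℝ} (hε : 0 ≤ ε)
    (hpn : p n ≤ ε) {A : Set ℝ} (hA : MeasurableSet A) :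
    μ.real (Sᶜ ∩ T^[n] ⁻¹' A) ≤ μ.real A * (μ.real Sᶜ + 3 * ε) := by
  have hSc : MeasurableSet Sᶜ := hS.measurableSet.compl
  have h := hcorr n hn (A.indicator 1) (Sᶜ.indicator 1)
    ((integrable_indicator_iff hA).2 (integrableOn_const (measure_ne_top μ A)))
    (ne_top_of_le_ne_top (by norm_num) (hS.eVariationOn_indicator_one_compl_le X))
  have hprod : (fun x => A.indicator (1 : ℝ → ℝ) (T^[n] x) * Sᶜ.indicator 1 x)
      = (Sᶜ ∩ T^[n] ⁻¹' A).indicator 1 := by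
    rw [inter_comm, inter_indicator_one]
    rfl
  rw [hprod, integral_indicator_one (hSc.inter ((hT.iterate n) hA)), integral_indicator_one hA,
    integral_indicator_one hSc, integral_abs_indicator_one hA] at h
  have hbv : bvNorm X μ (Sᶜ.indicator 1) * p n ≤ 3 * ε := by
    calc _ ≤ bvNorm X μ (Sᶜ.indicator 1) * ε := by gcongr; exact bvNorm_nonneg X μ _
      _ ≤ 3 * ε := by gcongr; exact bvNorm_indicator_one_compl_le hS
  linarith [le_abs_self (μ.real (Sᶜ ∩ T^[n] ⁻¹' A) - μ.real A * μ.real Sᶜ),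
    mul_le_mul_of_nonneg_left hbv (measureReal_nonneg (μ := μ) (s := A))]

theorem measureReal_missSet_le_pow_div (hcorr : DecayOfCorrelations X μ T p)
    (hT : Measurable T) (hS : S.OrdConnected) {n : ℕ} (hn : 1 ≤ n) {ε : ℝ} (hε : 0 ≤ ε)
    (hpn : p n ≤ ε) (m : ℕ) :
    μ.real (missSet T S m) ≤ (μ.real Sᶜ + 3 * ε) ^ (m / n) :=
  (measureReal_mono (missSet_subset_missSet_iterate n m)).trans <|
    measureReal_missSet_le_pow (hT.iterate n) hS.measurableSet (by positivity)
      (fun _ hA => measureReal_compl_inter_preimage_le hcorr hT hS hn hε hpn hA) (m / n)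

end Correlations

theorem summable_exp_neg_mul_rpow {κ δ : ℝ} (hκ : 0 < κ) (hδ : 0 < δ) :
    Summable fun m : ℕ => exp (-κ * (m : ℝ) ^ δ) := by
  have h := (isLittleO_exp_neg_mul_rpow_atTop hκ (-2 / δ)).comp_tendsto
    ((tendsto_rpow_atTop hδ).comp tendsto_natCast_atTop_atTop)
  refine summable_of_isBigO_nat (summable_nat_rpow.2 (by norm_num : (-2 : ℝ) < -1))
    (h.isBigO.congr_right fun m => ?_)
  simp only [Function.comp_apply, ← rpow_mul m.cast_nonneg, mul_div_cancel₀ _ hδ.ne']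

theorem pow_div_le_exp {q x : ℝ} (hq : 0 ≤ q) (hqx : q ≤ 1 - x) (hx : 0 ≤ x) (m n : ℕ) :
    q ^ (m / n) ≤ exp x * exp (-(x * (m / n))) := by
  have hfloor : (m : ℝ) / n - 1 ≤ (m / n : ℕ) := by
    simpa [Nat.floor_div_eq_div] using (Nat.sub_one_lt_floor ((m : ℝ) / n)).le
  calc q ^ (m / n) ≤ exp (-x) ^ (m / n) := by gcongr; linarith [one_sub_le_exp_neg x]
    _ = exp (-(x * (m / n : ℕ))) := by rw [← exp_nat_mul]; ring_nf
    _ ≤ exp (x + -(x * (m / n))) := by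
        gcongr
        nlinarith [mul_le_mul_of_nonneg_left hfloor hx]
    _ = exp x * exp (-(x * (m / n))) := exp_add _ _

theorem exists_gap_of_poly_decay {C c t a : ℝ} (hC : 0 ≤ C) (hc : 0 < c) (ht : 0 < t) (ha : 0 ≤ a) :
    ∃ K > 0, ∀ m : ℕ, 1 ≤ m → ∃ n : ℕ, 1 ≤ n ∧ 6 * C / (n : ℝ) ^ t ≤ c / (m : ℝ) ^ a ∧
      (n : ℝ) ≤ K * (m : ℝ) ^ (a / t) := by
  set K₀ := (6 * C / c + 1) ^ t⁻¹
  have hbase : 1 ≤ 6 * C / c + 1 := le_add_of_nonneg_left (by positivity)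
  have hK₀ : 1 ≤ K₀ := one_le_rpow hbase (by positivity)
  refine ⟨2 * K₀, by positivity, fun m hm => ⟨⌈K₀ * (m : ℝ) ^ (a / t)⌉₊, ?_⟩⟩
  have hm1 : (1 : ℝ) ≤ m := by exact_mod_cast hm
  have hKm : 1 ≤ K₀ * (m : ℝ) ^ (a / t) :=
    one_le_mul_of_one_le_of_one_le hK₀ (one_le_rpow hm1 (by positivity))
  have hpow : (K₀ * (m : ℝ) ^ (a / t)) ^ t = (6 * C / c + 1) * (m : ℝ) ^ a := by
    rw [mul_rpow (by positivity) (by positivity), ← rpow_mul (by positivity),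
      ← rpow_mul (by positivity), inv_mul_cancel₀ ht.ne', div_mul_cancel₀ _ ht.ne', rpow_one]
  refine ⟨Nat.one_le_ceil_iff.2 (by positivity), ?_, ?_⟩
  · have hnt : (6 * C / c + 1) * (m : ℝ) ^ a ≤ (⌈K₀ * (m : ℝ) ^ (a / t)⌉₊ : ℝ) ^ t :=
      hpow ▸ rpow_le_rpow (by positivity) (Nat.le_ceil _) ht.le
    calc 6 * C / _ ≤ 6 * C / ((6 * C / c + 1) * (m : ℝ) ^ a) := by gcongr
      _ ≤ c / (m : ℝ) ^ a := by
        rw [← div_div]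
        gcongr
        rw [div_le_iff₀ (by positivity), mul_add, mul_div_cancel₀ _ hc.ne']
        linarith
  · rw [mul_assoc]
    exact Nat.ceil_le_two_mul (by linarith)

theorem exists_measureReal_missSet_le_exp {X : Set ℝ} {μ : Measure ℝ} [IsProbabilityMeasure μ]
    {T : ℝ → ℝ} {p : ℕ → ℝ} (hcorr : DecayOfCorrelations X μ T p) (hT : Measurable T)
    {C t c a : ℝ} (hC : 0 ≤ C) (ht : 0 < t) (hp : ∀ n : ℕ, 1 ≤ n → p n ≤ C / (n : ℝ) ^ t)
    (hc : 0 < c) (ha : 0 < a) (hat : a < t / (1 + t)) :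
    ∃ κ > (0 : ℝ), ∃ δ > (0 : ℝ), ∀ m : ℕ, 1 ≤ m → ∀ S : Set ℝ, S.OrdConnected →
      c / (m : ℝ) ^ a ≤ μ.real S →
        μ.real (missSet T S m) ≤ exp (c / 2) * exp (-κ * (m : ℝ) ^ δ) := by
  obtain ⟨K, hK, hgap⟩ := exists_gap_of_poly_decay hC hc ht ha.le
  have hδ : 0 < 1 - a - a / t := by
    rw [lt_div_iff₀ (by linarith)] at hat
    field_simp
    linarith
  refine ⟨c / (2 * K), by positivity, 1 - a - a / t, hδ, fun m hm S hS hSμ => ?_⟩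
  obtain ⟨n, hn, hCn, hnK⟩ := hgap m hm
  have hm0 : (0 : ℝ) < m := by exact_mod_cast hm
  have hn0 : (0 : ℝ) < n := by exact_mod_cast hn
  set x := c / (2 * (m : ℝ) ^ a)
  have hq : μ.real Sᶜ + 3 * (C / (n : ℝ) ^ t) ≤ 1 - x := by
    rw [measureReal_compl hS.measurableSet, probReal_univ]
    have : 3 * (C / (n : ℝ) ^ t) = 6 * C / (n : ℝ) ^ t / 2 := by ring
    have : x = c / (m : ℝ) ^ a / 2 := by ring
    linarith
  have hxm : c / (2 * K) * (m : ℝ) ^ (1 - a - a / t) ≤ x * (m / n) := by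
    have hsplit : (m : ℝ) ^ (1 - a - a / t) = m / ((m : ℝ) ^ a * (m : ℝ) ^ (a / t)) := by
      rw [eq_div_iff (by positivity), ← rpow_add hm0, ← rpow_add hm0]
      norm_num
    calc c / (2 * K) * (m : ℝ) ^ (1 - a - a / t) = x * (m / (K * (m : ℝ) ^ (a / t))) := by
          rw [hsplit]; simp only [x]; field_simp
      _ ≤ x * (m / n) := by gcongr
  have hx : x ≤ c / 2 := div_le_div_of_nonneg_left hc.le (by norm_num)
    (by linarith [one_le_rpow (by exact_mod_cast hm : (1 : ℝ) ≤ m) ha.le])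
  calc μ.real (missSet T S m) ≤ (μ.real Sᶜ + 3 * (C / (n : ℝ) ^ t)) ^ (m / n) :=
        measureReal_missSet_le_pow_div hcorr hT hS hn (by positivity) (hp n hn) m
    _ ≤ exp x * exp (-(x * (m / n))) := pow_div_le_exp (by positivity) hq (by positivity) m n
    _ ≤ exp (c / 2) * exp (-(c / (2 * K)) * (m : ℝ) ^ (1 - a - a / t)) := by
        gcongr
        linarith

theorem eah_full_poly_mixing_general
    (X : Set ℝ) (hX : X.OrdConnected)
    (μ : Measure ℝ) [IsProbabilityMeasure μ]
    (T : ℝ → ℝ) (hT : MeasurePreserving T μ μ)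
    (p : ℕ → ℝ) (C t : ℝ) (hC : 0 ≤ C) (ht : 0 < t)
    (hp : ∀ n : ℕ, 1 ≤ n → p n ≤ C / (n : ℝ) ^ t)
    (hcorr : ∀ n : ℕ, 1 ≤ n → ∀ f g : ℝ → ℝ, Integrable f μ →
      eVariationOn g X ≠ ∞ →
      |(∫ x, f (T^[n] x) * g x ∂μ) - (∫ x, f x ∂μ) * ∫ x, g x ∂μ| ≤
        (∫ x, |f x| ∂μ) * bvNorm X μ g * p n)
    (y : ℕ → ℝ) (r : ℕ → ℝ)
    (B : ℕ → Set ℝ) (hB : ∀ m, B m = Metric.ball (y m) (r m) ∩ X)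
    (c a : ℝ) (hc : 0 < c) (ha : a < t / (1 + t))
    (hbig : ∀ m : ℕ, 1 ≤ m → ENNReal.ofReal (c / (m : ℝ) ^ a) ≤ μ (B m)) :
    μ (eahSet T B) = 1 := by
  -- Enlarging `a` only weakens `hbig`, so we may assume `a > 0`.
  obtain ⟨a', ha', ha't, haa'⟩ : ∃ a', 0 < a' ∧ a' < t / (1 + t) ∧ a ≤ a' :=
    ⟨max a (t / (1 + t) / 2), lt_max_of_lt_right (by positivity),
      max_lt ha (half_lt_self (by positivity)), le_max_left _ _⟩
  obtain ⟨κ, hκ, δ, hδ, hbound⟩ :=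
    exists_measureReal_missSet_le_exp hcorr hT.measurable hC ht hp hc ha' ha't
  refine measure_eahSet_eq_one_of_summable (Summable.of_norm_bounded_eventually_nat
    ((summable_exp_neg_mul_rpow hκ hδ).mul_left (exp (c / 2))) ?_)
  filter_upwards [eventually_ge_atTop 1] with m hm
  rw [Real.norm_of_nonneg measureReal_nonneg]
  refine hbound m hm (B m) (hB m ▸ (Real.ball_eq_Ioo _ _ ▸ ordConnected_Ioo).inter hX) ?_
  calc c / (m : ℝ) ^ a' ≤ c / (m : ℝ) ^ a := by gcongr; exact_mod_cast hm
    _ ≤ μ.real (B m) := (ENNReal.ofReal_le_iff_le_toReal (measure_ne_top μ _)).1 (hbig m hm)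

/-- Polynomial decay of correlations for `L¹` against `BV` of order `t > 0` implies
that the set of eventually always hitting points has full measure, provided
`μ (B m) ≥ c / m^a` for some `c > 0` and `a < t/(1+t)` and all `m ≥ 1`. -/
theorem eah_full_poly_mixing
    (X : Set ℝ) (hX : X.OrdConnected)
    (μ : Measure ℝ) [IsProbabilityMeasure μ] (hsupp : μ Xᶜ = 0)
    (T : ℝ → ℝ) (hT : MeasurePreserving T μ μ)
    (p : ℕ → ℝ) (C t : ℝ) (hC : 0 ≤ C) (ht : 0 < t)
    (hp : ∀ n : ℕ, 1 ≤ n → p n ≤ C / (n : ℝ) ^ t)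
    (hcorr : ∀ n : ℕ, 1 ≤ n → ∀ f g : ℝ → ℝ, Integrable f μ →
      eVariationOn g X ≠ ∞ →
      |(∫ x, f (T^[n] x) * g x ∂μ) - (∫ x, f x ∂μ) * ∫ x, g x ∂μ| ≤
        (∫ x, |f x| ∂μ) * bvNorm X μ g * p n)
    (y : ℕ → ℝ) (hy : ∀ m, y m ∈ X) (r : ℕ → ℝ) (hr : ∀ m, 0 ≤ r m)
    (B : ℕ → Set ℝ) (hB : ∀ m, B m = Metric.ball (y m) (r m) ∩ X)
    (hlim : Tendsto (fun m => μ (B m)) atTop (nhds 0))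
    (c a : ℝ) (hc : 0 < c) (ha : a < t / (1 + t))
    (hbig : ∀ m : ℕ, 1 ≤ m → ENNReal.ofReal (c / (m : ℝ) ^ a) ≤ μ (B m)) :
    μ (eahSet T B) = 1 :=
  eah_full_poly_mixing_general X hX μ T hT p C t hC ht hp hcorr y r B hB c a hc ha hbig
end
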